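/- arXiv:1703.07041 — 4 statements merged into one kernel-verified Lean document; each statement's English description precedes it below -/
import Mathlib

section
/- Let S be a nonempty compact set, R : S → ℝ a continuous nonnegative function, and P : S → ℝ a continuous positive function. Define q* = sup_{x ∈ S} R(x)/P(x). Then q* is attained and max_{x ∈ S} (R(x) − q*·P(x)) = 0. -/
/-- Dinkelbach fractional-programming equivalence: the supremum ratio `q* = sup R/P`
over a nonempty compact set is attained, and the subtractive objective
`R x - q* * P x` has maximum value `0` over the set. -/
theorem dinkelbach_attained_and_max_zero
    {X : Type*} [TopologicalSpace X] {S : Set X}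
    (hS : IsCompact S) (hne : S.Nonempty)
    {R P : X → ℝ} (hR : ContinuousOn R S) (hP : ContinuousOn P S)
    (hR0 : ∀ x ∈ S, 0 ≤ R x) (hP0 : ∀ x ∈ S, 0 < P x) :
    (∃ x ∈ S, R x / P x = sSup ((fun y => R y / P y) '' S)) ∧
      IsGreatest ((fun x => R x - sSup ((fun y => R y / P y) '' S) * P x) '' S) 0 := by
  have hcont : ContinuousOn (fun y => R y / P y) S :=
    hR.div hP (fun x hx => (hP0 x hx).ne')
  obtain ⟨x, hxS, hx⟩ := hS.exists_sSup_image_eq_and_ge hne hcont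
  set q := sSup ((fun y => R y / P y) '' S) with hq
  obtain ⟨hx1, hx2⟩ := hx
  refine ⟨⟨x, hxS, hx1.symm⟩, ⟨⟨x, hxS, ?_⟩, ?_⟩⟩
  · show R x - q * P x = 0
    rw [hx1, div_mul_cancel₀ _ (hP0 x hxS).ne', sub_self]
  · rintro z ⟨y, hyS, rfl⟩
    show R y - q * P y ≤ 0
    have h := hx2 y hyS
    rw [← hx1] at h
    have hPy := hP0 y hyS
    have := (div_le_iff₀ hPy).mp h
    linarith
end

section
/- Let S be a nonempty compact set, R : S → ℝ continuous nonnegative, P : S → ℝ continuous positive, and q* = max_{x ∈ S} R(x)/P(x). A point x* ∈ S satisfies R(x*)/P(x*) = q* if and only if x* maximizes x ↦ R(x) − q*·P(x) over S. -/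
/-- Dinkelbach: a feasible point attains the maximum ratio `q*` iff it maximizes
the subtractive objective `R x - q* * P x` over the feasible set. -/
theorem dinkelbach_ratio_max_iff_subtractive_max
    {X : Type*} [TopologicalSpace X] {S : Set X}
    (hS : IsCompact S) (hne : S.Nonempty)
    {R P : X → ℝ} (hR : ContinuousOn R S) (hP : ContinuousOn P S)
    (hR0 : ∀ x ∈ S, 0 ≤ R x) (hP0 : ∀ x ∈ S, 0 < P x)
    {qstar : ℝ} (hq : IsGreatest ((fun x => R x / P x) '' S) qstar) :
    ∀ xstar ∈ S,
      (R xstar / P xstar = qstar ↔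
        ∀ x ∈ S, R x - qstar * P x ≤ R xstar - qstar * P xstar) := by
  intro xstar hxstar
  have key : ∀ x ∈ S, R x - qstar * P x ≤ 0 := by
    intro x hx
    have h1 : R x / P x ≤ qstar := hq.2 ⟨x, hx, rfl⟩
    have h2 : R x ≤ qstar * P x := (div_le_iff₀ (hP0 x hx)).mp h1
    linarith
  constructor
  · intro heq
    have h0 : R xstar - qstar * P xstar = 0 := by
      have := (div_eq_iff (hP0 xstar hxstar).ne').mp heq
      linarith
    intro x hx
    rw [h0]
    exact key x hx
  · intro hmax
    obtain ⟨x0, hx0, hx0eq⟩ := hq.1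
    have h0 : R x0 - qstar * P x0 = 0 := by
      have := (div_eq_iff (hP0 x0 hx0).ne').mp hx0eq
      linarith
    have hge : 0 ≤ R xstar - qstar * P xstar := h0 ▸ hmax x0 hx0
    have hle := key xstar hxstar
    have : R xstar = qstar * P xstar := by linarith
    rw [this, mul_div_assoc, div_self (hP0 xstar hxstar).ne', mul_one]
end

section
/- Let S be finite and nonempty, R : S → ℝ nonnegative, P : S → ℝ positive. The Dinkelbach iteration q_{s+1} = R(x_s)/P(x_s), where x_s ∈ argmax_{x∈S}(R(x) − q_s·P(x)), starting from q_1 = 0, produces a nondecreasing sequence (q_s) bounded above by q* = max_x R(x)/P(x). -/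
/-- Monotone boundedness of the Dinkelbach iteration over a finite set: starting
from `q 1 = 0`, with `x s` maximizing the subtractive objective at parameter `q s`
and `q (s+1) = R (x s) / P (x s)`, the sequence `q` is nondecreasing (from index 1)
and bounded above by the optimal ratio `q*`. -/
theorem dinkelbach_iteration_monotone_bounded
    {X : Type*} (S : Finset X) (hne : S.Nonempty) (R P : X → ℝ)
    (hR0 : ∀ y ∈ S, 0 ≤ R y) (hP0 : ∀ y ∈ S, 0 < P y)
    {qstar : ℝ} (hstar : IsGreatest ((fun y => R y / P y) '' ↑S) qstar)
    (q : ℕ → ℝ) (x : ℕ → X) (hq1 : q 1 = 0)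
    (hx : ∀ s, 1 ≤ s → x s ∈ S)
    (hopt : ∀ s, 1 ≤ s → ∀ y ∈ S, R y - q s * P y ≤ R (x s) - q s * P (x s))
    (hiter : ∀ s, 1 ≤ s → q (s + 1) = R (x s) / P (x s)) :
    (∀ s, 1 ≤ s → q s ≤ q (s + 1)) ∧ (∀ s, 1 ≤ s → q s ≤ qstar) := by
  obtain ⟨y₀, hy₀S, hy₀⟩ := hstar.1
  have hq0 : 0 ≤ qstar := by
    rw [← hy₀]
    exact div_nonneg (hR0 y₀ hy₀S) (hP0 y₀ hy₀S).le
  -- boundedness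
  have hb : ∀ s, 1 ≤ s → q s ≤ qstar := by
    intro s hs
    induction s with
    | zero => omega
    | succ n ih =>
      rcases Nat.eq_or_lt_of_le hs with h | h
      · have : n = 0 := by omega
        subst this; rw [hq1]; exact hq0
      · have hn : 1 ≤ n := by omega
        rw [hiter n hn]
        exact hstar.2 ⟨x n, hx n hn, rfl⟩
  refine ⟨?_, hb⟩
  intro s hs
  have hPx := hP0 (x s) (hx s hs)
  -- R y₀ = qstar * P y₀
  have hRy : R y₀ = qstar * P y₀ := by
    rw [← hy₀]
    field_simp [(hP0 y₀ hy₀S).ne']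
  have h1 : 0 ≤ R y₀ - q s * P y₀ := by
    rw [hRy]
    have := hb s hs
    nlinarith [hP0 y₀ hy₀S]
  have h2 := (h1.trans (hopt s hs y₀ hy₀S))
  rw [hiter s hs]
  rw [le_div_iff₀ hPx]
  linarith
end

section
/- Under the setting of the Dinkelbach iteration over a finite set S with R ≥ 0 and P > 0: if F(q_s) = max_x (R(x) − q_s P(x)) = 0 then q_s = q* = max_x R(x)/P(x). Moreover, if q_s < q* then q_{s+1} > q_s (strict increase), so the iteration reaches q* in finitely many steps. -/
/-- Finite convergence of the Dinkelbach iteration over a finite set: `F(q_s) = 0`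
implies `q_s = q*`; if `q_s < q*` the iterate strictly increases; and the iteration
reaches `q*` after finitely many steps. -/
theorem dinkelbach_iteration_finite_convergence
    {X : Type*} (S : Finset X) (hne : S.Nonempty) (R P : X → ℝ)
    (hR0 : ∀ y ∈ S, 0 ≤ R y) (hP0 : ∀ y ∈ S, 0 < P y)
    {qstar : ℝ} (hstar : IsGreatest ((fun y => R y / P y) '' ↑S) qstar)
    (q : ℕ → ℝ) (x : ℕ → X) (hq1 : q 1 = 0)
    (hx : ∀ s, 1 ≤ s → x s ∈ S)
    (hopt : ∀ s, 1 ≤ s → ∀ y ∈ S, R y - q s * P y ≤ R (x s) - q s * P (x s))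
    (hiter : ∀ s, 1 ≤ s → q (s + 1) = R (x s) / P (x s)) :
    (∀ s, 1 ≤ s → R (x s) - q s * P (x s) = 0 → q s = qstar) ∧
      (∀ s, 1 ≤ s → q s < qstar → q s < q (s + 1)) ∧
      (∃ s, 1 ≤ s ∧ q s = qstar) := by
  obtain ⟨y0, hy0S, hy0⟩ := hstar.1
  have hy0S' : y0 ∈ S := hy0S
  have hPy0 : 0 < P y0 := hP0 y0 hy0S'
  have hy0R : R y0 = qstar * P y0 := by
    field_simp at hy0
    linarith
  have hub : ∀ y ∈ S, R y / P y ≤ qstar := fun y hy => hstar.2 ⟨y, hy, rfl⟩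
  have part1 : ∀ s, 1 ≤ s → R (x s) - q s * P (x s) = 0 → q s = qstar := by
    intro s hs h0
    have hxs := hx s hs
    have hPx : 0 < P (x s) := hP0 _ hxs
    have hqs : q s = R (x s) / P (x s) := by
      rw [eq_div_iff hPx.ne']
      linarith
    have h1 : q s ≤ qstar := hqs ▸ hub _ hxs
    have h2 : qstar ≤ q s := by
      have hopt0 := hopt s hs y0 hy0S'
      nlinarith
    linarith
  have part2 : ∀ s, 1 ≤ s → q s < qstar → q s < q (s + 1) := by
    intro s hs hlt
    have hxs := hx s hs
    have hPx : 0 < P (x s) := hP0 _ hxs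
    have hopt0 := hopt s hs y0 hy0S'
    rw [hiter s hs, lt_div_iff₀ hPx]
    nlinarith
  refine ⟨part1, part2, ?_⟩
  by_contra hcon
  push_neg at hcon
  have hle : ∀ s, 1 ≤ s → q s ≤ qstar := by
    intro s hs
    obtain rfl | ⟨t, ht, rfl⟩ : s = 1 ∨ ∃ t, 1 ≤ t ∧ s = t + 1 := by
      rcases Nat.lt_or_ge s 2 with h | h
      · left; omega
      · right; exact ⟨s - 1, by omega, by omega⟩
    · rw [hq1, ← hy0]
      exact div_nonneg (hR0 y0 hy0S') hPy0.le
    · rw [hiter t ht]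
      exact hub _ (hx t ht)
  have hlt : ∀ s, 1 ≤ s → q s < qstar := fun s hs =>
    lt_of_le_of_ne (hle s hs) (hcon s hs)
  have hmono : StrictMono (fun n => q (n + 1)) :=
    strictMono_nat_of_lt_succ (fun n => part2 (n + 1) (by omega) (hlt (n + 1) (by omega)))
  set T := S.image (fun y => R y / P y) with hT
  have hmaps : ∀ n ∈ Finset.range (T.card + 1), q (n + 2) ∈ T := by
    intro n _
    rw [show n + 2 = (n + 1) + 1 from rfl, hiter (n + 1) (by omega)]
    exact Finset.mem_image_of_mem _ (hx (n + 1) (by omega))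
  obtain ⟨i, hi, j, hj, hij, heq⟩ :=
    Finset.exists_ne_map_eq_of_card_lt_of_maps_to (by simp) hmaps
  apply hij
  have : i + 1 = j + 1 := hmono.injective (by simpa using heq)
  omega
end
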